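/- For all x ∈ ℝ⁴ with x₃² ≤ γ₃ and x₂² ≤ γ₂ (γ₂, γ₃ > 0), the WKH model with γ = δ = 1 satisfies the cross-product bound: φ₁(x)φ₄(x) ≤ (γ₃/2)(x₂+x₁)² + (γ₂/2)(x₄−x₁)², where φ₁(x) = x₂x₄ − x₃² and φ₄(x) = −x₂x₁. -/
import Mathlib

/-- for x ∈ ℝ⁴ with x₃² ≤ γ₃ and x₂² ≤ γ₂ (γ₂, γ₃ > 0), the WKH model
    with γ = δ = 1 satisfies φ₁(x)φ₄(x) ≤ (γ₃/2)(x₂+x₁)² + (γ₂/2)(x₄−x₁)²,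
    where φ₁(x) = x₂x₄ − x₃² and φ₄(x) = −x₂x₁. -/
theorem wkh_phi1_phi4_cross_bound (x₁ x₂ x₃ x₄ γ₂ γ₃ : ℝ)
    (hγ₂ : 0 < γ₂) (hγ₃ : 0 < γ₃) (hx₃ : x₃ ^ 2 ≤ γ₃) (hx₂ : x₂ ^ 2 ≤ γ₂) :
    (x₂ * x₄ - x₃ ^ 2) * (-(x₂ * x₁)) ≤
      γ₃ / 2 * (x₂ + x₁) ^ 2 + γ₂ / 2 * (x₄ - x₁) ^ 2 := by
  nlinarith [mul_nonneg (sub_nonneg.2 hx₃) (sq_nonneg (x₂ + x₁)),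
    mul_nonneg (sub_nonneg.2 hx₂) (sq_nonneg (x₄ - x₁)),
    mul_nonneg (sq_nonneg x₃) (add_nonneg (sq_nonneg x₁) (sq_nonneg x₂)),
    mul_nonneg (sq_nonneg x₂) (add_nonneg (sq_nonneg x₄) (sq_nonneg x₁))]
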